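/- arXiv:1503.02299 — 4 statements merged into one kernel-verified Lean document; each statement's English description precedes it below -/
import Mathlib

section
/- For every $L^2_k$-atom $a$ supported in a closed ball $B = B(0,R)$ centered at the origin, the Hardy-type averaging operator satisfies $\|\mathcal{H}_k a\|_{L^1(\nu_k)} \leq 2$. -/
open MeasureTheory Metric Filter Topology Set

noncomputable section

/-- The Dunkl weight function. -/
def dunklWeight {d : ℕ} (Rp : Finset (EuclideanSpace ℝ (Fin d)))
    (k : EuclideanSpace ℝ (Fin d) → ℝ) (x : EuclideanSpace ℝ (Fin d)) : ℝ :=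
  ∏ ξ ∈ Rp, |(inner ℝ ξ x : ℝ)| ^ (2 * k ξ)

/-- The weighted measure `ν_k`. -/
def dunklMeasure {d : ℕ} (Rp : Finset (EuclideanSpace ℝ (Fin d)))
    (k : EuclideanSpace ℝ (Fin d) → ℝ) : Measure (EuclideanSpace ℝ (Fin d)) :=
  volume.withDensity fun x => ENNReal.ofReal (dunklWeight Rp k x)

/-- An `L²_k`-atom supported in the closed ball of center `x₀` and radius `r`. -/
def IsL2Atom {d : ℕ} (ν : Measure (EuclideanSpace ℝ (Fin d)))
    (a : EuclideanSpace ℝ (Fin d) → ℝ) (x₀ : EuclideanSpace ℝ (Fin d)) (r : ℝ) : Prop :=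
  MemLp a 2 ν ∧ Function.support a ⊆ closedBall x₀ r ∧
    (∫ x, |a x| ^ 2 ∂ν) ^ ((1 : ℝ)/2) ≤ (ν (closedBall x₀ r)).toReal ^ (-(1 : ℝ)/2) ∧
    ∫ x in closedBall x₀ r, a x ∂ν = 0

/-- The Hardy-type averaging operator `H_k`. -/
def hardyOp {d : ℕ} (ν : Measure (EuclideanSpace ℝ (Fin d)))
    (f : EuclideanSpace ℝ (Fin d) → ℝ) (x : EuclideanSpace ℝ (Fin d)) : ℝ :=
  (ν (closedBall 0 ‖x‖)).toReal⁻¹ * ∫ y in closedBall (0 : EuclideanSpace ℝ (Fin d)) ‖x‖, f y ∂ν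

/-!
Write `V r = ν (closedBall 0 r)`. For `‖x‖ ≥ R` the ball `closedBall 0 ‖x‖` contains the support
of the atom, so `H a x = 0` by cancellation. For `‖x‖ < R`, Cauchy–Schwarz on `closedBall 0 ‖x‖`
gives `|H a x| ≤ ‖a‖₂ V(‖x‖)^(-1/2)`. For every measure, `ν {x | V ‖x‖ < c} ≤ c`, so
`x ↦ V(‖x‖)^(-1/2)` lies in weak `L²` with constant `1`, and the layer-cake formula bounds its
integral over `ball 0 R` by `2 V(R)^(1/2)`. The normalisation of the atom says
`‖a‖₂ V(R)^(1/2) ≤ 1`.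
-/

open Function
open scoped ENNReal

section General

variable {α : Type*} [MeasurableSpace α]

theorem measure_setOf_measure_le_lt_le (μ : Measure α) (f : α → ℝ) (c : ℝ≥0∞) :
    μ {x | μ {y | f y ≤ f x} < c} ≤ c := by
  set S := {x | μ {y | f y ≤ f x} < c}
  by_cases hmax : ∃ x₀ ∈ S, ∀ x ∈ S, f x ≤ f x₀
  · obtain ⟨x₀, hx₀, hmax⟩ := hmax
    exact (measure_mono fun x hx => hmax x hx).trans hx₀.le
  push Not at hmax
  -- no maximum on `S`: cover `S` by a countable chain of sublevel sets, each of measure `< c`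
  set T := {q : ℚ | ∃ x ∈ S, (q : ℝ) ≤ f x}
  have hcover : S ⊆ ⋃ q ∈ T, {y | f y ≤ q} := by
    intro x hx
    obtain ⟨x', hx', hlt⟩ := hmax x hx
    obtain ⟨q, hxq, hqx'⟩ := exists_rat_btwn hlt
    exact mem_biUnion ⟨x', hx', hqx'.le⟩ hxq.le
  have hdir : DirectedOn ((· ⊆ ·) on fun q : ℚ => {y | f y ≤ q}) T := by
    intro q hq q' hq'
    rcases le_total q q' with h | h
    · exact ⟨q', hq', fun y (hy : f y ≤ q) => hy.trans (by exact_mod_cast h), subset_rfl⟩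
    · exact ⟨q, hq, subset_rfl, fun y (hy : f y ≤ q') => hy.trans (by exact_mod_cast h)⟩
  calc μ S ≤ μ (⋃ q ∈ T, {y | f y ≤ q}) := measure_mono hcover
    _ = ⨆ q ∈ T, μ {y | f y ≤ q} := measure_biUnion_eq_iSup T.to_countable hdir
    _ ≤ c := iSup₂_le fun q ⟨x, hx, hqx⟩ =>
      ((measure_mono fun y hy => le_trans hy hqx).trans_lt hx).le

/-- `μ.real s ^ (-1/2)` is `0` when `μ s` is `0` or `∞`, as is the average. -/
theorem enorm_setAverage_le_eLpNorm_two_mul {μ : Measure α} {f : α → ℝ}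
    (hf : AEStronglyMeasurable f μ) (s : Set α) :
    ‖⨍ x in s, f x ∂μ‖ₑ ≤ eLpNorm f 2 μ * ENNReal.ofReal (μ.real s ^ (-(1 / 2) : ℝ)) := by
  rcases eq_or_ne (μ s) 0 with h0 | h0
  · simp [Measure.restrict_eq_zero.mpr h0]
  rcases eq_or_ne (μ s) ⊤ with htop | htop
  · simp [setAverage_eq, htop, measureReal_def]
  have hL1 : ‖∫ x in s, f x ∂μ‖ₑ ≤ eLpNorm f 2 μ * μ s ^ (1 / 2 : ℝ) := calc
    ‖∫ x in s, f x ∂μ‖ₑ ≤ eLpNorm f 1 (μ.restrict s) :=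
      (enorm_integral_le_lintegral_enorm _).trans_eq eLpNorm_one_eq_lintegral_enorm.symm
    _ ≤ eLpNorm f 2 (μ.restrict s) * μ s ^ (1 / 2 : ℝ) := by
      convert eLpNorm_le_eLpNorm_mul_rpow_measure_univ (μ := μ.restrict s) one_le_two hf.restrict
        using 3 <;> norm_num
    _ ≤ eLpNorm f 2 μ * μ s ^ (1 / 2 : ℝ) := by
      gcongr
      exact Measure.restrict_le_self
  have hreal : 0 < μ.real s := ENNReal.toReal_pos h0 htop
  rw [setAverage_eq, smul_eq_mul, enorm_mul, Real.enorm_of_nonneg (by positivity),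
    ENNReal.ofReal_inv_of_pos hreal, measureReal_def, ENNReal.ofReal_toReal htop]
  calc (μ s)⁻¹ * ‖∫ x in s, f x ∂μ‖ₑ ≤ (μ s)⁻¹ * (eLpNorm f 2 μ * μ s ^ (1 / 2 : ℝ)) := by
        gcongr
    _ = eLpNorm f 2 μ * (μ s ^ (-1 : ℝ) * μ s ^ (1 / 2 : ℝ)) := by
        rw [ENNReal.rpow_neg_one]; ring
    _ = eLpNorm f 2 μ * ENNReal.ofReal ((μ s).toReal ^ (-(1 / 2) : ℝ)) := by
        rw [← ENNReal.rpow_add _ _ h0 htop, ENNReal.toReal_rpow,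
          ENNReal.ofReal_toReal (ENNReal.rpow_ne_top_of_ne_zero h0 htop)]
        norm_num

theorem lintegral_ofReal_le_two_mul_rpow_measure_univ {μ : Measure α} {g : α → ℝ}
    (hg_nonneg : 0 ≤ g) (hg : AEMeasurable g μ)
    (hweak : ∀ t > 0, μ {x | t < g x} ≤ ENNReal.ofReal (t ^ (-2 : ℝ))) :
    ∫⁻ x, ENNReal.ofReal (g x) ∂μ ≤ 2 * μ univ ^ (1 / 2 : ℝ) := by
  rcases eq_or_ne (μ univ) ⊤ with htop | htop
  · simp [htop]
  rcases eq_or_ne μ 0 with rfl | hμ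
  · simp
  set w := μ.real univ
  have hw : 0 < w := ENNReal.toReal_pos (Measure.measure_univ_ne_zero.mpr hμ) htop
  -- split the layer-cake integral where the two bounds `μ univ` and `t⁻²` cross
  set c := w ^ (-(1 / 2) : ℝ)
  have hc : 0 < c := Real.rpow_pos_of_pos hw _
  have hsmall : ∫⁻ t in Ioc 0 c, μ {x | t < g x} ≤ ENNReal.ofReal (w ^ (1 / 2 : ℝ)) := calc
    ∫⁻ t in Ioc 0 c, μ {x | t < g x} ≤ ∫⁻ t in Ioc 0 c, μ univ :=
      lintegral_mono fun t => measure_mono (subset_univ _)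
    _ = ENNReal.ofReal (w ^ (1 / 2 : ℝ)) := by
      rw [setLIntegral_const, Real.volume_Ioc, sub_zero, ← ofReal_measureReal htop,
        ← ENNReal.ofReal_mul hw.le, ← Real.rpow_one_add' hw.le (by norm_num)]
      norm_num
  have hlarge : ∫⁻ t in Ioi c, μ {x | t < g x} ≤ ENNReal.ofReal (w ^ (1 / 2 : ℝ)) := calc
    ∫⁻ t in Ioi c, μ {x | t < g x} ≤ ∫⁻ t in Ioi c, ENNReal.ofReal (t ^ (-2 : ℝ)) :=
      setLIntegral_mono' measurableSet_Ioi fun t ht => hweak t (hc.trans ht)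
    _ = ENNReal.ofReal (∫ t in Ioi c, t ^ (-2 : ℝ)) :=
      (ofReal_integral_eq_lintegral_ofReal (integrableOn_Ioi_rpow_of_lt (by norm_num) hc)
        (ae_restrict_of_forall_mem measurableSet_Ioi fun t ht =>
          (Real.rpow_pos_of_pos (hc.trans ht) _).le)).symm
    _ = ENNReal.ofReal (w ^ (1 / 2 : ℝ)) := by
      rw [integral_Ioi_rpow_of_lt (by norm_num) hc, ← Real.rpow_mul hw.le]
      norm_num
  calc ∫⁻ x, ENNReal.ofReal (g x) ∂μ = ∫⁻ t in Ioi 0, μ {x | t < g x} :=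
        lintegral_eq_lintegral_meas_lt μ (Eventually.of_forall hg_nonneg) hg
    _ = (∫⁻ t in Ioc 0 c, μ {x | t < g x}) + ∫⁻ t in Ioi c, μ {x | t < g x} := by
        rw [← Ioc_union_Ioi_eq_Ioi hc.le, lintegral_union measurableSet_Ioi
          (Ioc_disjoint_Ioi le_rfl)]
    _ ≤ 2 * μ univ ^ (1 / 2 : ℝ) := by
        rw [two_mul, ← ofReal_measureReal htop, ENNReal.ofReal_rpow_of_pos hw]
        exact add_le_add hsmall hlarge

end General

section NormedGroup

variable {E : Type*} [SeminormedAddCommGroup E] [MeasurableSpace E]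

theorem measure_setOf_lt_measureReal_closedBall_rpow_le (μ : Measure E) {t : ℝ} (ht : 0 < t) :
    μ {x | t < μ.real (closedBall 0 ‖x‖) ^ (-(1 / 2) : ℝ)} ≤ ENNReal.ofReal (t ^ (-2 : ℝ)) := by
  refine le_trans (measure_mono fun x (hx : t < _) => ?_)
    (measure_setOf_measure_le_lt_le μ norm (ENNReal.ofReal (t ^ (-2 : ℝ))))
  set v := μ.real (closedBall 0 ‖x‖)
  have hv : 0 < v := by
    by_contra! hv
    rw [le_antisymm hv measureReal_nonneg, Real.zero_rpow (by norm_num)] at hx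
    exact hx.not_gt ht
  have hfin : μ (closedBall 0 ‖x‖) ≠ ⊤ := fun h => hv.ne' (by simp [v, measureReal_def, h])
  have hlt : v < t ^ (-2 : ℝ) := by
    have := Real.rpow_lt_rpow_of_neg ht hx (by norm_num : (-2 : ℝ) < 0)
    rwa [← Real.rpow_mul hv.le, show (-(1 / 2) * -2 : ℝ) = 1 by norm_num, Real.rpow_one] at this
  have hball : {y : E | ‖y‖ ≤ ‖x‖} = closedBall 0 ‖x‖ := by ext; simp
  rw [mem_ofPred_eq, hball, ← ofReal_measureReal hfin]
  exact (ENNReal.ofReal_lt_ofReal_iff (hv.trans hlt)).mpr hlt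

theorem lintegral_ball_measureReal_closedBall_rpow_le [OpensMeasurableSpace E] (μ : Measure E)
    (R : ℝ) :
    ∫⁻ x in ball 0 R, ENNReal.ofReal (μ.real (closedBall 0 ‖x‖) ^ (-(1 / 2) : ℝ)) ∂μ
      ≤ 2 * μ (closedBall 0 R) ^ (1 / 2 : ℝ) := by
  have hV : Monotone fun r => μ (closedBall (0 : E) r) :=
    fun r r' h => measure_mono (closedBall_subset_closedBall h)
  refine (lintegral_ofReal_le_two_mul_rpow_measure_univ (fun x => by positivity)
    ((hV.measurable.comp continuous_norm.measurable).ennreal_toReal.pow_const _).aemeasurable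
    fun t ht => ?_).trans ?_
  · exact (Measure.restrict_apply_le _ _).trans
      (measure_setOf_lt_measureReal_closedBall_rpow_le μ ht)
  · rw [Measure.restrict_apply_univ]
    gcongr
    exact ball_subset_closedBall

end NormedGroup

section Hardy

variable {d : ℕ} {ν : Measure (EuclideanSpace ℝ (Fin d))}

theorem hardyOp_eq_setAverage (f : EuclideanSpace ℝ (Fin d) → ℝ) (x : EuclideanSpace ℝ (Fin d)) :
    hardyOp ν f x = ⨍ y in closedBall 0 ‖x‖, f y ∂ν := by
  rw [setAverage_eq, smul_eq_mul]
  rfl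

theorem hardyOp_eq_zero_of_le_norm {f : EuclideanSpace ℝ (Fin d) → ℝ} {R : ℝ}
    (hsupp : support f ⊆ closedBall 0 R) (hmean : ∫ y in closedBall 0 R, f y ∂ν = 0)
    {x : EuclideanSpace ℝ (Fin d)} (hx : R ≤ ‖x‖) :
    hardyOp ν f x = 0 := by
  rw [hardyOp, setIntegral_eq_of_subset_of_forall_sdiff_eq_zero measurableSet_closedBall
    (closedBall_subset_closedBall hx) fun y hy => notMem_support.mp fun h => hy.2 (hsupp h),
    hmean, mul_zero]

theorem IsL2Atom.enorm_hardyOp_le_indicator {a : EuclideanSpace ℝ (Fin d) → ℝ} {R : ℝ}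
    (ha : IsL2Atom ν a 0 R) (x : EuclideanSpace ℝ (Fin d)) :
    ‖hardyOp ν a x‖ₑ ≤ (ball 0 R).indicator
      (fun x => eLpNorm a 2 ν * ENNReal.ofReal (ν.real (closedBall 0 ‖x‖) ^ (-(1 / 2) : ℝ))) x := by
  obtain ⟨haL2, hsupp, -, hmean⟩ := ha
  by_cases hx : x ∈ ball 0 R
  · rw [indicator_of_mem hx, hardyOp_eq_setAverage]
    exact enorm_setAverage_le_eLpNorm_two_mul haL2.aestronglyMeasurable _
  · rw [hardyOp_eq_zero_of_le_norm hsupp hmean (by simpa using hx), indicator_of_notMem hx,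
      enorm_zero]

theorem IsL2Atom.eLpNorm_two_mul_rpow_measure_le_one {a : EuclideanSpace ℝ (Fin d) → ℝ}
    {x₀ : EuclideanSpace ℝ (Fin d)} {r : ℝ} (ha : IsL2Atom ν a x₀ r) :
    eLpNorm a 2 ν * ν (closedBall x₀ r) ^ (1 / 2 : ℝ) ≤ 1 := by
  obtain ⟨haL2, -, hnorm, -⟩ := ha
  have heq : eLpNorm a 2 ν = ENNReal.ofReal ((∫ x, |a x| ^ 2 ∂ν) ^ (1 / 2 : ℝ)) := by
    rw [haL2.eLpNorm_eq_integral_rpow_norm two_ne_zero ENNReal.ofNat_ne_top]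
    norm_num
  rw [heq]
  rcases eq_or_ne (ν (closedBall x₀ r)) ⊤ with htop | htop
  · have hzero : (∫ x, |a x| ^ 2 ∂ν) ^ (1 / 2 : ℝ) ≤ 0 := by
      simpa [measureReal_def, htop] using hnorm
    rw [ENNReal.ofReal_eq_zero.mpr hzero, zero_mul]
    exact zero_le_one
  rw [← ofReal_measureReal htop, ENNReal.ofReal_rpow_of_nonneg measureReal_nonneg (by norm_num),
    ← ENNReal.ofReal_mul (by positivity)]
  refine ENNReal.ofReal_le_one.mpr ?_
  calc _ ≤ ν.real (closedBall x₀ r) ^ (-1 / 2 : ℝ) * ν.real (closedBall x₀ r) ^ (1 / 2 : ℝ) := by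
        gcongr
        exact hnorm
    _ ≤ 1 := by
        rcases measureReal_nonneg.eq_or_lt with h | h
        · rw [← h, Real.zero_rpow (by norm_num)]; norm_num
        · rw [← Real.rpow_add h]; norm_num

end Hardy

theorem eLpNorm_one_hardyOp_atom_le_two_general {d : ℕ}
    (Rp : Finset (EuclideanSpace ℝ (Fin d)))
    (k : EuclideanSpace ℝ (Fin d) → ℝ)
    (a : EuclideanSpace ℝ (Fin d) → ℝ) (R : ℝ)
    (ha : IsL2Atom (dunklMeasure Rp k) a 0 R) :
    eLpNorm (hardyOp (dunklMeasure Rp k) a) 1 (dunklMeasure Rp k) ≤ 2 := by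
  set ν := dunklMeasure Rp k
  calc eLpNorm (hardyOp ν a) 1 ν = ∫⁻ x, ‖hardyOp ν a x‖ₑ ∂ν := eLpNorm_one_eq_lintegral_enorm
    _ ≤ ∫⁻ x in ball 0 R,
          eLpNorm a 2 ν * ENNReal.ofReal (ν.real (closedBall 0 ‖x‖) ^ (-(1 / 2) : ℝ)) ∂ν := by
      rw [← lintegral_indicator measurableSet_ball]
      exact lintegral_mono ha.enorm_hardyOp_le_indicator
    _ = eLpNorm a 2 ν *
          ∫⁻ x in ball 0 R, ENNReal.ofReal (ν.real (closedBall 0 ‖x‖) ^ (-(1 / 2) : ℝ)) ∂ν :=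
      lintegral_const_mul' _ _ ha.1.eLpNorm_ne_top
    _ ≤ eLpNorm a 2 ν * (2 * ν (closedBall 0 R) ^ (1 / 2 : ℝ)) := by
      gcongr
      exact lintegral_ball_measureReal_closedBall_rpow_le ν R
    _ ≤ 2 := by
      rw [mul_left_comm]
      exact mul_le_of_le_one_right' ha.eLpNorm_two_mul_rpow_measure_le_one

/-- For every `L²_k`-atom `a` supported in a closed ball `B(0,R)` centered at the origin,
`‖H_k a‖_{L¹(ν_k)} ≤ 2`. -/
theorem eLpNorm_one_hardyOp_atom_le_two {d : ℕ} (hd : 0 < d)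
    (Rp : Finset (EuclideanSpace ℝ (Fin d))) (hRp : ∀ ξ ∈ Rp, ξ ≠ 0)
    (k : EuclideanSpace ℝ (Fin d) → ℝ) (hk : ∀ ξ ∈ Rp, 0 ≤ k ξ)
    (a : EuclideanSpace ℝ (Fin d) → ℝ) (R : ℝ) (hR : 0 < R)
    (ha : IsL2Atom (dunklMeasure Rp k) a 0 R) :
    eLpNorm (hardyOp (dunklMeasure Rp k) a) 1 (dunklMeasure Rp k) ≤ 2 :=
  eLpNorm_one_hardyOp_atom_le_two_general Rp k a R ha
end
end

section
/- If $f = \sum_{j=1}^N \lambda_j a_j$ is a finite linear combination of $L^2_k$-atoms $a_j$ (each supported in a closed ball centered at the origin) with scalars $\lambda_j$, then $\|\mathcal{H}_k f\|_{L^1(\nu_k)} \leq 2 \sum_{j=1}^N |\lambda_j|$. -/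
open MeasureTheory Metric Filter Topology Set

noncomputable section

open scoped ENNReal

/-! For an atom `a` supported in `B(0, R)`, the cancellation `∫ a dν = 0` makes `H a` vanish
outside `B(0, R)`, and Cauchy–Schwarz gives `|H a(x)| ≤ ‖a‖₂ V(‖x‖)^(-1/2)` with
`V(ρ) = ν(B(0, ρ))`. Since `ν {x | V(‖x‖) < c} ≤ c`, the layer-cake formula bounds
`∫_{B(0,R)} V(‖x‖)^(-1/2) dν` by `∫₀^∞ min(V(R), t⁻²) dt = 2 V(R)^(1/2)`, so the size condition
`‖a‖₂ ≤ V(R)^(-1/2)` gives `‖H a‖₁ ≤ 2`. Linearity of `H` and the triangle inequality finish. -/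

theorem ENNReal.inv_mul_rpow_two_inv_le (x : ℝ≥0∞) : x⁻¹ * x ^ (2⁻¹ : ℝ) ≤ x ^ (-2⁻¹ : ℝ) := by
  rcases eq_or_ne x 0 with rfl | h0
  · simp
  rcases eq_or_ne x ⊤ with rfl | htop
  · simp
  rw [← ENNReal.rpow_neg_one, ← ENNReal.rpow_add _ _ h0 htop]
  norm_num

theorem ENNReal.lt_ofReal_rpow_neg_two_of_lt_toReal {x : ℝ≥0∞} {t : ℝ} (ht : 0 < t)
    (h : t < (x ^ (-2⁻¹ : ℝ)).toReal) : x < ENNReal.ofReal (t ^ (-2 : ℝ)) := by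
  have h' : ENNReal.ofReal t < x⁻¹ ^ (2⁻¹ : ℝ) := by
    rw [ENNReal.inv_rpow, ← ENNReal.rpow_neg]
    exact ((ENNReal.ofReal_lt_ofReal_iff (ht.trans h)).mpr h).trans_le ENNReal.ofReal_toReal_le
  rw [ENNReal.lt_rpow_inv_iff two_pos, ENNReal.lt_inv_iff_lt_inv] at h'
  rwa [Real.rpow_neg ht.le, ENNReal.ofReal_inv_of_pos (by positivity),
    ← ENNReal.ofReal_rpow_of_pos ht]

theorem lintegral_Ioi_min_ofReal_rpow_neg_two_le (V : ℝ≥0∞) :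
    ∫⁻ t in Ioi (0 : ℝ), min V (ENNReal.ofReal (t ^ (-2 : ℝ))) ≤ 2 * V ^ (2⁻¹ : ℝ) := by
  rcases eq_or_ne V 0 with rfl | h0
  · simp
  rcases eq_or_ne V ⊤ with rfl | htop
  · simp
  have hV : 0 < V.toReal := ENNReal.toReal_pos h0 htop
  set t₀ := V.toReal ^ (-2⁻¹ : ℝ) with ht₀_def
  have ht₀ : 0 < t₀ := Real.rpow_pos_of_pos hV _
  have hVt₀ : ENNReal.ofReal t₀ = V ^ (-2⁻¹ : ℝ) := by
    rw [ht₀_def, ENNReal.toReal_rpow,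
      ENNReal.ofReal_toReal (by simp [ENNReal.rpow_eq_top_iff, h0, htop])]
  have head : ∫⁻ t in Ioc 0 t₀, min V (ENNReal.ofReal (t ^ (-2 : ℝ))) ≤ V ^ (2⁻¹ : ℝ) :=
    calc _ ≤ ∫⁻ _ in Ioc 0 t₀, V :=
          setLIntegral_mono measurable_const fun _ _ => min_le_left _ _
      _ = V ^ (1 : ℝ) * V ^ (-2⁻¹ : ℝ) := by
        rw [setLIntegral_const, Real.volume_Ioc, sub_zero, hVt₀, ENNReal.rpow_one]
      _ = V ^ (2⁻¹ : ℝ) := by rw [← ENNReal.rpow_add _ _ h0 htop]; norm_num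
  have tail : ∫⁻ t in Ioi t₀, min V (ENNReal.ofReal (t ^ (-2 : ℝ))) ≤ V ^ (2⁻¹ : ℝ) := by
    have hmeas : Measurable fun t : ℝ => ENNReal.ofReal (t ^ (-2 : ℝ)) := by fun_prop
    have hnonneg : 0 ≤ᵐ[volume.restrict (Ioi t₀)] fun t : ℝ => t ^ (-2 : ℝ) :=
      (ae_restrict_mem measurableSet_Ioi).mono fun t ht => Real.rpow_nonneg (ht₀.trans ht).le _
    refine (setLIntegral_mono hmeas fun _ _ => min_le_right _ _).trans_eq ?_
    rw [← ofReal_integral_eq_lintegral_ofReal (integrableOn_Ioi_rpow_of_lt (by norm_num) ht₀)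
        hnonneg, integral_Ioi_rpow_of_lt (by norm_num) ht₀,
      ← ENNReal.ofReal_toReal (a := V ^ (2⁻¹ : ℝ)) (by simp [ENNReal.rpow_eq_top_iff, htop]),
      ← ENNReal.toReal_rpow, ← Real.rpow_mul hV.le]
    norm_num
  calc _ = (∫⁻ t in Ioc 0 t₀, min V (ENNReal.ofReal (t ^ (-2 : ℝ))))
        + ∫⁻ t in Ioi t₀, min V (ENNReal.ofReal (t ^ (-2 : ℝ))) := by
        rw [← lintegral_union measurableSet_Ioi (Ioc_disjoint_Ioi le_rfl),
          Ioc_union_Ioi_eq_Ioi ht₀.le]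
    _ ≤ V ^ (2⁻¹ : ℝ) + V ^ (2⁻¹ : ℝ) := add_le_add head tail
    _ = 2 * V ^ (2⁻¹ : ℝ) := (two_mul _).symm

section RadialMeasure

variable {E : Type*} [SeminormedAddCommGroup E] [MeasurableSpace E] (ν : Measure E)

theorem measure_setOf_measure_closedBall_lt (c : ℝ≥0∞) :
    ν {x | ν (closedBall 0 ‖x‖) < c} ≤ c := by
  set s : Set ℝ := {r | ν (closedBall 0 r) < c}
  have hs : IsLowerSet s := fun r r' h hr =>
    (measure_mono (closedBall_subset_closedBall h)).trans_lt hr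
  have := hs.ordConnected
  have hT : {x | ν (closedBall 0 ‖x‖) < c} = ⋃ r : s, closedBall (0 : E) r := by
    ext x
    simp only [mem_ofPred_eq, mem_iUnion, mem_closedBall_zero_iff, Subtype.exists, exists_prop]
    exact ⟨fun hx => ⟨‖x‖, hx, le_rfl⟩, fun ⟨r, hr, hxr⟩ => hs hxr hr⟩
  have hmono : Monotone fun r : s => closedBall (0 : E) r := fun _ _ h =>
    closedBall_subset_closedBall h
  rw [hT, hmono.measure_iUnion]
  exact iSup_le fun r => r.2.le

theorem measure_setOf_measure_closedBall_eq_zero :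
    ν {x | ν (closedBall 0 ‖x‖) = 0} = 0 :=
  nonpos_iff_eq_zero.mp <| le_of_forall_gt_imp_ge_of_dense fun c hc =>
    (measure_mono fun _ (hx : _ = 0) => (hx ▸ hc : _ < c)).trans
      (measure_setOf_measure_closedBall_lt ν c)

variable [OpensMeasurableSpace E]

theorem measurable_measure_closedBall_norm : Measurable fun x : E => ν (closedBall 0 ‖x‖) :=
  (Monotone.measurable fun _ _ h => measure_mono (closedBall_subset_closedBall h)).comp
    continuous_norm.measurable

theorem lintegral_ball_measure_closedBall_rpow_le (R : ℝ) :
    ∫⁻ x in ball (0 : E) R, ν (closedBall 0 ‖x‖) ^ (-2⁻¹ : ℝ) ∂ν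
      ≤ 2 * ν (closedBall 0 R) ^ (2⁻¹ : ℝ) := by
  set g : E → ℝ≥0∞ := fun x => ν (closedBall 0 ‖x‖) ^ (-2⁻¹ : ℝ)
  have hg : Measurable g := (measurable_measure_closedBall_norm ν).pow_const _
  have hg_ne_top : ∀ᵐ x ∂ν.restrict (ball 0 R), g x ≠ ⊤ := ae_restrict_of_ae <|
    measure_mono_null (fun x hx => by simpa [g, ENNReal.rpow_eq_top_iff] using hx)
      (measure_setOf_measure_closedBall_eq_zero ν)
  have hlevel : ∀ t ∈ Ioi (0 : ℝ), ν.restrict (ball 0 R) {x | t < (g x).toReal}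
      ≤ min (ν (closedBall 0 R)) (ENNReal.ofReal (t ^ (-2 : ℝ))) := by
    intro t (ht : 0 < t)
    have hsub : {x | t < (g x).toReal}
        ⊆ {x | ν (closedBall 0 ‖x‖) < ENNReal.ofReal (t ^ (-2 : ℝ))} := fun _ hx =>
      ENNReal.lt_ofReal_rpow_neg_two_of_lt_toReal ht hx
    refine le_min ?_ ((Measure.restrict_apply_le _ _).trans <|
      (measure_mono hsub).trans (measure_setOf_measure_closedBall_lt ν _))
    calc ν.restrict (ball 0 R) {x | t < (g x).toReal} ≤ ν (ball 0 R) :=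
          (measure_mono (subset_univ _)).trans_eq (Measure.restrict_apply_univ _)
      _ ≤ ν (closedBall 0 R) := measure_mono ball_subset_closedBall
  calc ∫⁻ x in ball 0 R, g x ∂ν = ∫⁻ x in ball 0 R, ENNReal.ofReal (g x).toReal ∂ν :=
        lintegral_congr_ae (hg_ne_top.mono fun x hx => (ENNReal.ofReal_toReal hx).symm)
    _ = ∫⁻ t in Ioi 0, ν.restrict (ball 0 R) {x | t < (g x).toReal} :=
        lintegral_eq_lintegral_meas_lt _ (ae_of_all _ fun _ => ENNReal.toReal_nonneg)
          hg.ennreal_toReal.aemeasurable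
    _ ≤ ∫⁻ t in Ioi 0, min (ν (closedBall 0 R)) (ENNReal.ofReal (t ^ (-2 : ℝ))) :=
        setLIntegral_mono' measurableSet_Ioi hlevel
    _ ≤ 2 * ν (closedBall 0 R) ^ (2⁻¹ : ℝ) := lintegral_Ioi_min_ofReal_rpow_neg_two_le _

end RadialMeasure

section HardyOperator

variable {d : ℕ} {ν : Measure (EuclideanSpace ℝ (Fin d))}

theorem enorm_hardyOp_le {f : EuclideanSpace ℝ (Fin d) → ℝ} (hf : AEStronglyMeasurable f ν)
    (x : EuclideanSpace ℝ (Fin d)) :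
    ‖hardyOp ν f x‖ₑ ≤ eLpNorm f 2 ν * ν (closedBall 0 ‖x‖) ^ (-2⁻¹ : ℝ) := by
  set B := closedBall (0 : EuclideanSpace ℝ (Fin d)) ‖x‖
  have holder : ∫⁻ y in B, ‖f y‖ₑ ∂ν ≤ eLpNorm f 2 ν * ν B ^ (2⁻¹ : ℝ) := by
    have h := eLpNorm_le_eLpNorm_mul_rpow_measure_univ one_le_two (hf.restrict (s := B))
    rw [eLpNorm_one_eq_lintegral_enorm, Measure.restrict_apply_univ] at h
    refine h.trans (mul_le_mul' (eLpNorm_mono_measure _ Measure.restrict_le_self) (le_of_eq ?_))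
    norm_num
  calc ‖hardyOp ν f x‖ₑ = ‖(ν B).toReal⁻¹‖ₑ * ‖∫ y in B, f y ∂ν‖ₑ := enorm_mul _ _
    _ ≤ (ν B)⁻¹ * (eLpNorm f 2 ν * ν B ^ (2⁻¹ : ℝ)) := by
        gcongr
        · rw [← ENNReal.toReal_inv, Real.enorm_of_nonneg ENNReal.toReal_nonneg]
          exact ENNReal.ofReal_toReal_le
        · exact (enorm_integral_le_lintegral_enorm _).trans holder
    _ = eLpNorm f 2 ν * ((ν B)⁻¹ * ν B ^ (2⁻¹ : ℝ)) := by ring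
    _ ≤ eLpNorm f 2 ν * ν B ^ (-2⁻¹ : ℝ) := by gcongr; exact ENNReal.inv_mul_rpow_two_inv_le _

theorem measurable_hardyOp {f : EuclideanSpace ℝ (Fin d) → ℝ} (hf : Integrable f ν) :
    Measurable (hardyOp ν f) := by
  have hmono : ∀ g : EuclideanSpace ℝ (Fin d) → ℝ, Integrable g ν → 0 ≤ g →
      Monotone fun r : ℝ => ∫ y in closedBall 0 r, g y ∂ν := fun g hg hg0 _ _ h =>
    setIntegral_mono_set hg.integrableOn (ae_of_all _ hg0)
      (closedBall_subset_closedBall h).eventuallyLE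
  have hint : Measurable fun r : ℝ => ∫ y in closedBall 0 r, f y ∂ν := by
    simp_rw [integral_eq_integral_pos_part_sub_integral_neg_part hf.integrableOn]
    exact (hmono _ hf.real_toNNReal fun _ => NNReal.coe_nonneg _).measurable.sub
      (hmono _ hf.neg.real_toNNReal fun _ => NNReal.coe_nonneg _).measurable
  exact (measurable_measure_closedBall_norm ν).ennreal_toReal.inv.mul
    (hint.comp continuous_norm.measurable)

theorem hardyOp_finset_sum_mul {ι : Type*} (s : Finset ι) (c : ι → ℝ)
    {f : ι → EuclideanSpace ℝ (Fin d) → ℝ} (hf : ∀ i ∈ s, Integrable (f i) ν) :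
    hardyOp ν (fun y => ∑ i ∈ s, c i * f i y) = ∑ i ∈ s, c i • hardyOp ν (f i) := by
  ext x
  simp only [hardyOp, Finset.sum_apply, Pi.smul_apply, smul_eq_mul]
  rw [integral_finsetSum _ fun i hi => ((hf i hi).const_mul _).integrableOn, Finset.mul_sum]
  refine Finset.sum_congr rfl fun i _ => ?_
  rw [integral_const_mul]
  ring

namespace IsL2Atom

variable {a : EuclideanSpace ℝ (Fin d) → ℝ} {x₀ : EuclideanSpace ℝ (Fin d)} {r : ℝ}

theorem eLpNorm_le (ha : IsL2Atom ν a x₀ r) :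
    eLpNorm a 2 ν ≤ ν (closedBall x₀ r) ^ (-2⁻¹ : ℝ) := by
  obtain ⟨hmem, -, hnorm, -⟩ := ha
  rw [hmem.eLpNorm_eq_integral_rpow_norm two_ne_zero ENNReal.ofNat_ne_top]
  refine (ENNReal.ofReal_le_ofReal ?_).trans
    ((ENNReal.toReal_rpow _ _).symm ▸ ENNReal.ofReal_toReal_le)
  convert hnorm using 2 <;> norm_num

theorem integrable (ha : IsL2Atom ν a x₀ r) : Integrable a ν := by
  by_cases hV : ν (closedBall x₀ r) = ⊤
  · have h0 : eLpNorm a 2 ν = 0 :=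
      nonpos_iff_eq_zero.mp (ha.eLpNorm_le.trans_eq (by simp [hV]))
    exact (integrable_zero _ _ ν).congr
      ((eLpNorm_eq_zero_iff ha.1.aestronglyMeasurable two_ne_zero).mp h0).symm
  · have : IsFiniteMeasure (ν.restrict (closedBall x₀ r)) :=
      ⟨by rwa [Measure.restrict_apply_univ, lt_top_iff_ne_top]⟩
    exact (integrableOn_iff_integrable_of_support_subset ha.2.1).mp
      ((ha.1.restrict _).integrable one_le_two)

theorem hardyOp_eq_zero (ha : IsL2Atom ν a 0 r) {x : EuclideanSpace ℝ (Fin d)} (hx : r ≤ ‖x‖) :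
    hardyOp ν a x = 0 := by
  have h : ∀ ρ, r ≤ ρ → ∫ y in closedBall 0 ρ, a y ∂ν = ∫ y, a y ∂ν := fun ρ hρ =>
    setIntegral_eq_integral_of_forall_compl_eq_zero fun y hy =>
      Function.notMem_support.mp fun h => hy (closedBall_subset_closedBall hρ (ha.2.1 h))
  rw [hardyOp, h _ hx, ← h r le_rfl, ha.2.2.2, mul_zero]

theorem eLpNorm_hardyOp_le_two (ha : IsL2Atom ν a 0 r) : eLpNorm (hardyOp ν a) 1 ν ≤ 2 := by
  set V := ν (closedBall (0 : EuclideanSpace ℝ (Fin d)) r)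
  have hpt : ∀ x, ‖hardyOp ν a x‖ₑ ≤ (ball 0 r).indicator
      (fun x => V ^ (-2⁻¹ : ℝ) * ν (closedBall 0 ‖x‖) ^ (-2⁻¹ : ℝ)) x := by
    intro x
    by_cases hx : ‖x‖ < r
    · rw [indicator_of_mem (mem_ball_zero_iff.mpr hx)]
      exact (enorm_hardyOp_le ha.1.aestronglyMeasurable x).trans (by gcongr; exact ha.eLpNorm_le)
    · rw [ha.hardyOp_eq_zero (not_lt.mp hx)]
      simp
  rw [eLpNorm_one_eq_lintegral_enorm]
  calc ∫⁻ x, ‖hardyOp ν a x‖ₑ ∂ν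
      ≤ ∫⁻ x in ball 0 r, V ^ (-2⁻¹ : ℝ) * ν (closedBall 0 ‖x‖) ^ (-2⁻¹ : ℝ) ∂ν :=
        (lintegral_mono hpt).trans_eq (lintegral_indicator measurableSet_ball _)
    _ = V ^ (-2⁻¹ : ℝ) * ∫⁻ x in ball 0 r, ν (closedBall 0 ‖x‖) ^ (-2⁻¹ : ℝ) ∂ν :=
        lintegral_const_mul _ ((measurable_measure_closedBall_norm ν).pow_const _)
    _ ≤ V ^ (-2⁻¹ : ℝ) * (2 * V ^ (2⁻¹ : ℝ)) := by
        gcongr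
        exact lintegral_ball_measure_closedBall_rpow_le ν r
    _ = 2 * ((V ^ (2⁻¹ : ℝ))⁻¹ * V ^ (2⁻¹ : ℝ)) := by rw [ENNReal.rpow_neg]; ring
    _ ≤ 2 := mul_le_of_le_one_right' (ENNReal.inv_mul_le_one _)

end IsL2Atom

end HardyOperator

theorem eLpNorm_one_hardyOp_finite_combination_general {d : ℕ}
    (Rp : Finset (EuclideanSpace ℝ (Fin d)))
    (k : EuclideanSpace ℝ (Fin d) → ℝ)
    (N : ℕ) (lam : Fin N → ℝ) (a : Fin N → EuclideanSpace ℝ (Fin d) → ℝ)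
    (ha : ∀ j, ∃ R : ℝ, 0 < R ∧ IsL2Atom (dunklMeasure Rp k) (a j) 0 R) :
    eLpNorm (hardyOp (dunklMeasure Rp k) (fun x => ∑ j, lam j * a j x)) 1 (dunklMeasure Rp k)
      ≤ ENNReal.ofReal (2 * ∑ j, |lam j|) := by
  set ν := dunklMeasure Rp k
  choose _ _ hatom using ha
  have hint : ∀ j ∈ Finset.univ, Integrable (a j) ν := fun j _ => (hatom j).integrable
  rw [hardyOp_finset_sum_mul _ _ hint]
  calc eLpNorm (∑ j, lam j • hardyOp ν (a j)) 1 ν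
      ≤ ∑ j, ‖lam j‖ₑ * eLpNorm (hardyOp ν (a j)) 1 ν := by
        refine (eLpNorm_sum_le (fun j hj => ((measurable_hardyOp (hint j hj)).const_smul _)
          |>.aestronglyMeasurable) le_rfl).trans_eq ?_
        simp_rw [eLpNorm_const_smul]
    _ ≤ ∑ j, ‖lam j‖ₑ * 2 := by
        gcongr with j
        exact (hatom j).eLpNorm_hardyOp_le_two
    _ = ENNReal.ofReal (2 * ∑ j, |lam j|) := by
        rw [← Finset.sum_mul, mul_comm, ENNReal.ofReal_mul zero_le_two, ENNReal.ofReal_ofNat,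
          ENNReal.ofReal_sum_of_nonneg fun j _ => abs_nonneg _]
        simp_rw [Real.enorm_eq_ofReal_abs]

/-- If `f = ∑_{j=1}^N λ_j a_j` is a finite linear combination of `L²_k`-atoms, each supported
in a closed ball centered at the origin, then `‖H_k f‖_{L¹(ν_k)} ≤ 2 ∑ |λ_j|`. -/
theorem eLpNorm_one_hardyOp_finite_combination {d : ℕ} (hd : 0 < d)
    (Rp : Finset (EuclideanSpace ℝ (Fin d))) (hRp : ∀ ξ ∈ Rp, ξ ≠ 0)
    (k : EuclideanSpace ℝ (Fin d) → ℝ) (hk : ∀ ξ ∈ Rp, 0 ≤ k ξ)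
    (N : ℕ) (lam : Fin N → ℝ) (a : Fin N → EuclideanSpace ℝ (Fin d) → ℝ)
    (ha : ∀ j, ∃ R : ℝ, 0 < R ∧ IsL2Atom (dunklMeasure Rp k) (a j) 0 R) :
    eLpNorm (hardyOp (dunklMeasure Rp k) (fun x => ∑ j, lam j * a j x)) 1 (dunklMeasure Rp k)
      ≤ ENNReal.ofReal (2 * ∑ j, |lam j|) :=
  eLpNorm_one_hardyOp_finite_combination_general Rp k N lam a ha
end
end

section
/- Let $R > 0$, $C > 0$, and let $g : \mathbb{R}^d \to \mathbb{C}$ be measurable with $|g(y)| \leq C R \|y\|$ for all $y \in \mathbb{R}^d$ and $\int_{\mathbb{R}^d} |g(y)|^2\, d\nu_k(y) \leq \nu_k(B(0,R))^{-1}$. Then $\int_{\mathbb{R}^d} \|y\|^{-(2\gamma+d)} |g(y)|\, d\nu_k(y) \leq C\, d_k + 1$, where $d_k = \int_{S^{d-1}} w_k\, d\sigma$. -/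
open MeasureTheory Metric Filter Topology Set

noncomputable section

/-- The constant `d_k = ∫_{S^{d-1}} w_k dσ`, where `σ` is the surface measure on the unit
sphere, normalized so that the polar integration formula
`∫ f dx = ∫_0^∞ ∫_{S^{d-1}} f(ry) dσ(y) r^{d-1} dr` holds. -/
def dunklDk {d : ℕ} (Rp : Finset (EuclideanSpace ℝ (Fin d)))
    (k : EuclideanSpace ℝ (Fin d) → ℝ) : ℝ :=
  ∫ y : sphere (0 : EuclideanSpace ℝ (Fin d)) 1, dunklWeight Rp k ↑y
    ∂((volume : Measure (EuclideanSpace ℝ (Fin d))).toSphere)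

/-- The index `γ = ∑_{ξ ∈ R₊} k(ξ)`. -/
def dunklGamma {d : ℕ} (Rp : Finset (EuclideanSpace ℝ (Fin d)))
    (k : EuclideanSpace ℝ (Fin d) → ℝ) : ℝ :=
  ∑ ξ ∈ Rp, k ξ

/-! Split the integral at the sphere of radius `1/R`. Inside it, `‖g y‖ ≤ C R ‖y‖` bounds the
integrand by `C R ‖y‖^{1-(2γ+d)}`, and in polar coordinates (with `w_k` homogeneous of degree `2γ`)
this integrates to `C R · d_k · (1/R) = C d_k`. Outside it, Cauchy–Schwarz bounds the integral by
`(∫_{‖y‖>1/R} ‖y‖^{-2(2γ+d)} dν_k)^{1/2} (∫ |g|² dν_k)^{1/2}`, and the first factor squared equals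
`ν_k(B(0,R)) = d_k R^{2γ+d}/(2γ+d)`, so the product is at most `1`. -/

open scoped ENNReal
open Module

theorem ofReal_pow_pred_mul_ofReal_rpow {n : ℕ} (hn : 0 < n) {r : ℝ} (hr : 0 < r) (a : ℝ) :
    ENNReal.ofReal (r ^ (n - 1)) * ENNReal.ofReal (r ^ a) = ENNReal.ofReal (r ^ (a + n - 1)) := by
  rw [← ENNReal.ofReal_mul (by positivity), ← Real.rpow_natCast, Nat.cast_sub hn,
    ← Real.rpow_add hr, Nat.cast_one]
  ring_nf

theorem lintegral_Ioc_zero_ofReal_rpow {ρ : ℝ} (hρ : 0 ≤ ρ) {e : ℝ} (he : -1 < e) :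
    ∫⁻ r in Ioc 0 ρ, ENNReal.ofReal (r ^ e) = ENNReal.ofReal (ρ ^ (e + 1) / (e + 1)) := by
  rw [← ofReal_integral_eq_lintegral_ofReal (intervalIntegral.intervalIntegrable_rpow' he).1
      (ae_restrict_of_forall_mem measurableSet_Ioc fun r hr => Real.rpow_nonneg hr.1.le e),
    ← intervalIntegral.integral_of_le hρ, integral_rpow (Or.inl he),
    Real.zero_rpow (by linarith), sub_zero]

theorem lintegral_Ioi_ofReal_rpow {ρ : ℝ} (hρ : 0 < ρ) {e : ℝ} (he : e < -1) :
    ∫⁻ r in Ioi ρ, ENNReal.ofReal (r ^ e) = ENNReal.ofReal (-ρ ^ (e + 1) / (e + 1)) := by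
  rw [← ofReal_integral_eq_lintegral_ofReal (integrableOn_Ioi_rpow_of_lt he hρ)
      (ae_restrict_of_forall_mem measurableSet_Ioi fun r hr => Real.rpow_nonneg (hρ.trans hr).le e),
    integral_Ioi_rpow_of_lt he hρ]

theorem lintegral_mul_le_one_of_lintegral_sq_le {α : Type*} [MeasurableSpace α] {μ : Measure α}
    {f g : α → ℝ≥0∞} (hf : AEMeasurable f μ) (hg : AEMeasurable g μ) {V : ℝ≥0∞}
    (hfV : ∫⁻ x, f x ^ 2 ∂μ ≤ V) (hgV : ∫⁻ x, g x ^ 2 ∂μ ≤ V⁻¹) :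
    ∫⁻ x, f x * g x ∂μ ≤ 1 := by
  have hCS := ENNReal.lintegral_mul_le_Lp_mul_Lq μ Real.HolderConjugate.two_two hf hg
  simp only [ENNReal.rpow_two, Pi.mul_apply] at hCS
  calc ∫⁻ x, f x * g x ∂μ
      ≤ (∫⁻ x, f x ^ 2 ∂μ) ^ (1 / 2 : ℝ) * (∫⁻ x, g x ^ 2 ∂μ) ^ (1 / 2 : ℝ) := hCS
    _ ≤ V ^ (1 / 2 : ℝ) * V⁻¹ ^ (1 / 2 : ℝ) := by gcongr
    _ = (V * V⁻¹) ^ (1 / 2 : ℝ) := (ENNReal.mul_rpow_of_nonneg _ _ (by norm_num)).symm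
    _ ≤ 1 := ENNReal.rpow_le_one (ENNReal.mul_inv_le_one V) (by norm_num)

section HomogeneousWeight

variable {E : Type*} [NormedAddCommGroup E] [NormedSpace ℝ E] [MeasurableSpace E] [BorelSpace E]
  [FiniteDimensional ℝ E] [Nontrivial E] (μ : Measure E) [μ.IsAddHaarMeasure]
  {w : E → ℝ≥0∞} {a : ℝ}

theorem lintegral_eq_lintegral_toSphere_lintegral_Ioi {f : E → ℝ≥0∞} (hf : Measurable f) :
    ∫⁻ x, f x ∂μ = ∫⁻ y, (∫⁻ r in Ioi (0 : ℝ),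
      ENNReal.ofReal (r ^ (finrank ℝ E - 1)) * f (r • (y : E))) ∂μ.toSphere := by
  have hf0 : ∫⁻ x, f x ∂μ = ∫⁻ x in ({0}ᶜ : Set E), f x ∂μ := by
    rw [← lintegral_add_compl f (measurableSet_singleton 0)]
    simp [Measure.restrict_singleton, measure_singleton]
  set Φ := homeomorphUnitSphereProd E
  have hfΦ : Measurable fun p => f (Φ.symm p : E) :=
    hf.comp (continuous_subtype_val.comp Φ.symm.continuous).measurable
  have key := (Measure.measurePreserving_homeomorphUnitSphereProd μ).lintegral_comp hfΦ
  simp only [Φ, Homeomorph.symm_apply_apply] at key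
  rw [hf0, ← lintegral_subtype_comap (measurableSet_singleton (0 : E)).compl, key,
    lintegral_prod _ hfΦ.aemeasurable]
  refine lintegral_congr fun y => ?_
  have hfy : Measurable fun r : Ioi (0 : ℝ) => f (Φ.symm (y, r) : E) :=
    hfΦ.comp measurable_prodMk_left
  rw [Measure.volumeIoiPow, lintegral_withDensity_eq_lintegral_mul _
    (measurable_subtype_coe.pow_const _).ennreal_ofReal hfy]
  exact lintegral_subtype_comap measurableSet_Ioi
    (fun r : ℝ => ENNReal.ofReal (r ^ (finrank ℝ E - 1)) * f (r • (y : E)))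

theorem lintegral_comp_norm_withDensity (hw : Measurable w)
    (hwa : ∀ r : ℝ, 0 < r → ∀ x, w (r • x) = ENNReal.ofReal (r ^ a) * w x)
    {φ : ℝ → ℝ≥0∞} (hφ : Measurable φ) :
    ∫⁻ x, φ ‖x‖ ∂μ.withDensity w = (∫⁻ y, w y ∂μ.toSphere) *
      ∫⁻ r in Ioi (0 : ℝ), ENNReal.ofReal (r ^ (a + finrank ℝ E - 1)) * φ r := by
  rw [lintegral_withDensity_eq_lintegral_mul _ hw (g := fun x => φ ‖x‖) (hφ.comp measurable_norm),
    lintegral_eq_lintegral_toSphere_lintegral_Ioi μ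
      (hw.mul (hφ.comp measurable_norm) : Measurable (w * fun x => φ ‖x‖)),
    ← lintegral_mul_const (f := fun y : sphere (0 : E) 1 => w y) _
      (hw.comp measurable_subtype_coe)]
  refine lintegral_congr fun y => ?_
  rw [← lintegral_const_mul (f := fun r => ENNReal.ofReal (r ^ (a + finrank ℝ E - 1)) * φ r) _
    (by fun_prop)]
  refine setLIntegral_congr_fun measurableSet_Ioi fun r (hr : 0 < r) => ?_
  rw [Pi.mul_apply, norm_smul, norm_eq_of_mem_sphere y, mul_one,
    Real.norm_of_nonneg hr.le, hwa r hr, ← ofReal_pow_pred_mul_ofReal_rpow finrank_pos hr]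
  ring

theorem setLIntegral_preimage_norm_withDensity (hw : Measurable w)
    (hwa : ∀ r : ℝ, 0 < r → ∀ x, w (r • x) = ENNReal.ofReal (r ^ a) * w x)
    {φ : ℝ → ℝ≥0∞} (hφ : Measurable φ) {S : Set ℝ} (hS : MeasurableSet S) :
    ∫⁻ x in (‖·‖) ⁻¹' S, φ ‖x‖ ∂μ.withDensity w = (∫⁻ y, w y ∂μ.toSphere) *
      ∫⁻ r in S ∩ Ioi 0, ENNReal.ofReal (r ^ (a + finrank ℝ E - 1)) * φ r := by
  have hind : ((‖·‖) ⁻¹' S).indicator (fun x : E => φ ‖x‖) = fun x => S.indicator φ ‖x‖ :=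
    funext fun _ => Set.indicator_comp_right (‖·‖)
  rw [← lintegral_indicator (measurable_norm hS), hind,
    lintegral_comp_norm_withDensity μ hw hwa (hφ.indicator hS), ← Measure.restrict_restrict hS,
    ← lintegral_indicator hS]
  simp_rw [Set.indicator_mul_right]

theorem withDensity_apply_closedBall_zero (hw : Measurable w)
    (hwa : ∀ r : ℝ, 0 < r → ∀ x, w (r • x) = ENNReal.ofReal (r ^ a) * w x)
    (hs : 0 < a + finrank ℝ E) {ρ : ℝ} (hρ : 0 ≤ ρ) :
    μ.withDensity w (closedBall 0 ρ) = (∫⁻ y, w y ∂μ.toSphere) *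
      ENNReal.ofReal (ρ ^ (a + finrank ℝ E) / (a + finrank ℝ E)) := by
  have hball : closedBall (0 : E) ρ = (‖·‖) ⁻¹' Iic ρ := by ext; simp
  rw [← setLIntegral_one, hball, setLIntegral_preimage_norm_withDensity μ hw hwa
    (φ := fun _ => 1) measurable_const measurableSet_Iic, Iic_inter_Ioi]
  simp_rw [mul_one]
  rw [lintegral_Ioc_zero_ofReal_rpow hρ (by linarith), sub_add_cancel]

theorem setLIntegral_compl_closedBall_inv_norm_rpow (hw : Measurable w)
    (hwa : ∀ r : ℝ, 0 < r → ∀ x, w (r • x) = ENNReal.ofReal (r ^ a) * w x)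
    (hs : 0 < a + finrank ℝ E) {ρ : ℝ} (hρ : 0 < ρ) :
    ∫⁻ x in (closedBall 0 ρ⁻¹)ᶜ, ENNReal.ofReal (‖x‖ ^ (-(2 * (a + finrank ℝ E))))
        ∂μ.withDensity w = μ.withDensity w (closedBall 0 ρ) := by
  have hcompl : (closedBall (0 : E) ρ⁻¹)ᶜ = (‖·‖) ⁻¹' Ioi ρ⁻¹ := by ext; simp
  have hρ' : 0 < ρ⁻¹ := inv_pos.2 hρ
  rw [withDensity_apply_closedBall_zero μ hw hwa hs hρ.le, hcompl,
    setLIntegral_preimage_norm_withDensity μ hw hwa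
      (φ := fun r => ENNReal.ofReal (r ^ (-(2 * (a + finrank ℝ E))))) (by fun_prop)
      measurableSet_Ioi,
    Ioi_inter_Ioi, sup_eq_left.2 hρ'.le]
  congr 1
  rw [setLIntegral_congr_fun measurableSet_Ioi fun r (hr : ρ⁻¹ < r) => by
      rw [← ENNReal.ofReal_mul (Real.rpow_nonneg (hρ'.trans hr).le _),
        ← Real.rpow_add (hρ'.trans hr)],
    lintegral_Ioi_ofReal_rpow hρ' (by linarith),
    show a + finrank ℝ E - 1 + -(2 * (a + finrank ℝ E)) + 1 = -(a + finrank ℝ E) by ring,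
    Real.inv_rpow hρ.le, ← Real.rpow_neg hρ.le, neg_neg, neg_div_neg_eq]

theorem setLIntegral_closedBall_rpow_neg_norm_mul_norm_le (hw : Measurable w)
    (hwa : ∀ r : ℝ, 0 < r → ∀ x, w (r • x) = ENNReal.ofReal (r ^ a) * w x)
    {F : Type*} [NormedAddCommGroup F] {g : E → F} {C R : ℝ} (hC : 0 ≤ C) (hR : 0 < R)
    (hbound : ∀ y, ‖g y‖ ≤ C * R * ‖y‖) :
    ∫⁻ y in closedBall 0 R⁻¹, ENNReal.ofReal (‖y‖ ^ (-(a + finrank ℝ E)) * ‖g y‖)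
        ∂μ.withDensity w ≤ ENNReal.ofReal C * ∫⁻ y, w y ∂μ.toSphere := by
  set s := a + (finrank ℝ E : ℝ)
  have hpointwise : ∀ y, ‖y‖ ^ (-s) * ‖g y‖ ≤ C * R * ‖y‖ ^ (1 - s) := by
    intro y
    rcases eq_or_ne y 0 with rfl | hy
    · have hg0 : ‖g 0‖ = 0 := le_antisymm (by simpa using hbound 0) (norm_nonneg _)
      rw [hg0, mul_zero]
      positivity
    · have hy' : 0 < ‖y‖ := norm_pos_iff.2 hy
      calc ‖y‖ ^ (-s) * ‖g y‖ ≤ ‖y‖ ^ (-s) * (C * R * ‖y‖) := by gcongr; exact hbound y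
        _ = C * R * ‖y‖ ^ (1 - s) := by
          rw [Real.rpow_sub hy', Real.rpow_one, Real.rpow_neg hy'.le]
          field_simp
  have hball : closedBall (0 : E) R⁻¹ = (‖·‖) ⁻¹' Iic R⁻¹ := by ext; simp
  calc ∫⁻ y in closedBall 0 R⁻¹, ENNReal.ofReal (‖y‖ ^ (-s) * ‖g y‖) ∂μ.withDensity w
      ≤ ∫⁻ y in closedBall 0 R⁻¹, ENNReal.ofReal (C * R * ‖y‖ ^ (1 - s)) ∂μ.withDensity w :=
        lintegral_mono fun y => ENNReal.ofReal_le_ofReal (hpointwise y)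
    _ = (∫⁻ y, w y ∂μ.toSphere) * ∫⁻ r in Ioc 0 R⁻¹,
          ENNReal.ofReal (r ^ (s - 1)) * ENNReal.ofReal (C * R * r ^ (1 - s)) := by
        rw [hball, setLIntegral_preimage_norm_withDensity μ hw hwa
          (φ := fun r => ENNReal.ofReal (C * R * r ^ (1 - s))) (by fun_prop) measurableSet_Iic,
          Iic_inter_Ioi, add_sub_assoc]
    _ = (∫⁻ y, w y ∂μ.toSphere) * ∫⁻ _ in Ioc 0 R⁻¹, ENNReal.ofReal (C * R) := by
        congr 1
        refine setLIntegral_congr_fun measurableSet_Ioc fun r hr => ?_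
        rw [← ENNReal.ofReal_mul (Real.rpow_nonneg hr.1.le _), mul_left_comm,
          ← Real.rpow_add hr.1, sub_add_sub_cancel', sub_self, Real.rpow_zero, mul_one]
    _ = ENNReal.ofReal C * ∫⁻ y, w y ∂μ.toSphere := by
        rw [setLIntegral_const, Real.volume_Ioc, sub_zero, ← ENNReal.ofReal_mul (by positivity),
          mul_inv_cancel_right₀ hR.ne', mul_comm]

theorem setLIntegral_compl_closedBall_rpow_neg_norm_mul_norm_le_one (hw : Measurable w)
    (hwa : ∀ r : ℝ, 0 < r → ∀ x, w (r • x) = ENNReal.ofReal (r ^ a) * w x)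
    (hs : 0 < a + finrank ℝ E) {F : Type*} [NormedAddCommGroup F] [MeasurableSpace F]
    [OpensMeasurableSpace F] {g : E → F}
    (hg : AEMeasurable g (μ.withDensity w)) {R : ℝ} (hR : 0 < R)
    (hL2 : ∫⁻ y, ENNReal.ofReal (‖g y‖ ^ 2) ∂μ.withDensity w
      ≤ (μ.withDensity w (closedBall 0 R))⁻¹) :
    ∫⁻ y in (closedBall 0 R⁻¹)ᶜ, ENNReal.ofReal (‖y‖ ^ (-(a + finrank ℝ E)) * ‖g y‖)
        ∂μ.withDensity w ≤ 1 := by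
  simp_rw [ENNReal.ofReal_mul (Real.rpow_nonneg (norm_nonneg _) _)]
  refine lintegral_mul_le_one_of_lintegral_sq_le (by fun_prop)
    hg.norm.ennreal_ofReal.restrict ?_ (hL2.trans' ?_)
  · simp_rw [← ENNReal.ofReal_pow (Real.rpow_nonneg (norm_nonneg _) _), ← Real.rpow_natCast,
      ← Real.rpow_mul (norm_nonneg _), Nat.cast_ofNat, neg_mul, mul_comm _ (2 : ℝ)]
    exact (setLIntegral_compl_closedBall_inv_norm_rpow μ hw hwa hs hR).le
  · simp_rw [← ENNReal.ofReal_pow (norm_nonneg _)]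
    exact setLIntegral_le_lintegral _ _

theorem lintegral_rpow_neg_norm_mul_norm_le (hw : Measurable w)
    (hwa : ∀ r : ℝ, 0 < r → ∀ x, w (r • x) = ENNReal.ofReal (r ^ a) * w x)
    (hs : 0 < a + finrank ℝ E) {F : Type*} [NormedAddCommGroup F] [MeasurableSpace F]
    [OpensMeasurableSpace F] {g : E → F} (hg : AEMeasurable g (μ.withDensity w))
    {C R : ℝ} (hC : 0 ≤ C) (hR : 0 < R) (hbound : ∀ y, ‖g y‖ ≤ C * R * ‖y‖)
    (hL2 : ∫⁻ y, ENNReal.ofReal (‖g y‖ ^ 2) ∂μ.withDensity w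
      ≤ (μ.withDensity w (closedBall 0 R))⁻¹) :
    ∫⁻ y, ENNReal.ofReal (‖y‖ ^ (-(a + finrank ℝ E)) * ‖g y‖) ∂μ.withDensity w
      ≤ ENNReal.ofReal C * (∫⁻ y, w y ∂μ.toSphere) + 1 := by
  rw [← lintegral_add_compl _ (measurableSet_closedBall (x := 0) (ε := R⁻¹))]
  exact add_le_add (setLIntegral_closedBall_rpow_neg_norm_mul_norm_le μ hw hwa hC hR hbound)
    (setLIntegral_compl_closedBall_rpow_neg_norm_mul_norm_le_one μ hw hwa hs hg hR hL2)

end HomogeneousWeight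

section Dunkl

variable {d : ℕ} {Rp : Finset (EuclideanSpace ℝ (Fin d))} {k : EuclideanSpace ℝ (Fin d) → ℝ}

theorem dunklWeight_nonneg (x : EuclideanSpace ℝ (Fin d)) : 0 ≤ dunklWeight Rp k x :=
  Finset.prod_nonneg fun _ _ => Real.rpow_nonneg (abs_nonneg _) _

theorem dunklDk_nonneg : 0 ≤ dunklDk Rp k :=
  integral_nonneg fun _ => dunklWeight_nonneg _

theorem dunklGamma_nonneg (hk : ∀ ξ ∈ Rp, 0 ≤ k ξ) : 0 ≤ dunklGamma Rp k :=
  Finset.sum_nonneg hk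

theorem continuous_dunklWeight (hk : ∀ ξ ∈ Rp, 0 ≤ k ξ) : Continuous (dunklWeight Rp k) :=
  continuous_finsetProd _ fun ξ hξ =>
    (continuous_const.inner continuous_id).abs.rpow_const fun _ => Or.inr (by linarith [hk ξ hξ])

theorem dunklWeight_smul {r : ℝ} (hr : 0 < r) (x : EuclideanSpace ℝ (Fin d)) :
    dunklWeight Rp k (r • x) = r ^ (2 * dunklGamma Rp k) * dunklWeight Rp k x := by
  rw [dunklWeight, dunklWeight, dunklGamma, Finset.mul_sum, Real.rpow_sum_of_pos hr,
    ← Finset.prod_mul_distrib]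
  refine Finset.prod_congr rfl fun ξ _ => ?_
  rw [real_inner_smul_right, abs_mul, abs_of_pos hr, Real.mul_rpow hr.le (abs_nonneg _)]

theorem lintegral_toSphere_ofReal_dunklWeight (hk : ∀ ξ ∈ Rp, 0 ≤ k ξ) :
    ∫⁻ y, ENNReal.ofReal (dunklWeight Rp k y)
        ∂(volume : Measure (EuclideanSpace ℝ (Fin d))).toSphere = ENNReal.ofReal (dunklDk Rp k) :=
  (ofReal_integral_eq_lintegral_ofReal
    (((continuous_dunklWeight hk).comp continuous_subtype_val).integrable_of_hasCompactSupport
      (HasCompactSupport.of_compactSpace _))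
    (Eventually.of_forall fun _ => dunklWeight_nonneg _)).symm

end Dunkl

theorem lintegral_hardy_estimate_general {d : ℕ} (hd : 0 < d)
    (Rp : Finset (EuclideanSpace ℝ (Fin d)))
    (k : EuclideanSpace ℝ (Fin d) → ℝ) (hk : ∀ ξ ∈ Rp, 0 ≤ k ξ)
    (R C : ℝ) (hR : 0 < R) (hC : 0 < C)
    (g : EuclideanSpace ℝ (Fin d) → ℂ) (hg : Measurable g)
    (hbound : ∀ y : EuclideanSpace ℝ (Fin d), ‖g y‖ ≤ C * R * ‖y‖)
    (hL2 : ∫⁻ y, ENNReal.ofReal (‖g y‖ ^ 2) ∂(dunklMeasure Rp k)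
      ≤ ((dunklMeasure Rp k) (closedBall (0 : EuclideanSpace ℝ (Fin d)) R))⁻¹) :
    ∫⁻ y, ENNReal.ofReal (‖y‖ ^ (-(2 * dunklGamma Rp k + d)) * ‖g y‖)
          ∂(dunklMeasure Rp k)
      ≤ ENNReal.ofReal (C * dunklDk Rp k + 1) := by
  have : Nontrivial (EuclideanSpace ℝ (Fin d)) :=
    Module.nontrivial_of_finrank_pos (R := ℝ) (by rwa [finrank_euclideanSpace_fin])
  have hdim : (finrank ℝ (EuclideanSpace ℝ (Fin d)) : ℝ) = d := by
    rw [finrank_euclideanSpace_fin]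
  have hwa : ∀ r : ℝ, 0 < r → ∀ x, ENNReal.ofReal (dunklWeight Rp k (r • x))
      = ENNReal.ofReal (r ^ (2 * dunklGamma Rp k)) * ENNReal.ofReal (dunklWeight Rp k x) :=
    fun r hr x => by rw [dunklWeight_smul hr, ENNReal.ofReal_mul (by positivity)]
  have hs : 0 < 2 * dunklGamma Rp k + finrank ℝ (EuclideanSpace ℝ (Fin d)) := by
    rw [hdim]
    have : (0 : ℝ) < d := Nat.cast_pos.2 hd
    linarith [dunklGamma_nonneg hk]
  have key := lintegral_rpow_neg_norm_mul_norm_le volume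
    (continuous_dunklWeight hk).measurable.ennreal_ofReal hwa hs hg.aemeasurable hC.le hR hbound hL2
  rw [hdim, lintegral_toSphere_ofReal_dunklWeight hk] at key
  rwa [ENNReal.ofReal_add (mul_nonneg hC.le dunklDk_nonneg) zero_le_one,
    ENNReal.ofReal_mul hC.le, ENNReal.ofReal_one]

/-- Analytic core of Theorem 3.2: if `|g(y)| ≤ C R ‖y‖` and `∫ |g|² dν_k ≤ ν_k(B(0,R))⁻¹`,
then `∫_{ℝ^d} ‖y‖^{-(2γ+d)} |g(y)| dν_k(y) ≤ C d_k + 1`. -/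
theorem lintegral_hardy_estimate {d : ℕ} (hd : 0 < d)
    (Rp : Finset (EuclideanSpace ℝ (Fin d))) (hRp : ∀ ξ ∈ Rp, ξ ≠ 0)
    (k : EuclideanSpace ℝ (Fin d) → ℝ) (hk : ∀ ξ ∈ Rp, 0 ≤ k ξ)
    (R C : ℝ) (hR : 0 < R) (hC : 0 < C)
    (g : EuclideanSpace ℝ (Fin d) → ℂ) (hg : Measurable g)
    (hbound : ∀ y : EuclideanSpace ℝ (Fin d), ‖g y‖ ≤ C * R * ‖y‖)
    (hL2 : ∫⁻ y, ENNReal.ofReal (‖g y‖ ^ 2) ∂(dunklMeasure Rp k)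
      ≤ ((dunklMeasure Rp k) (closedBall (0 : EuclideanSpace ℝ (Fin d)) R))⁻¹) :
    ∫⁻ y, ENNReal.ofReal (‖y‖ ^ (-(2 * dunklGamma Rp k + d)) * ‖g y‖)
          ∂(dunklMeasure Rp k)
      ≤ ENNReal.ofReal (C * dunklDk Rp k + 1) :=
  lintegral_hardy_estimate_general hd Rp k hk R C hR hC g hg hbound hL2
end
end

section
/- (Doubling property) There exists a constant $c > 0$ such that for every $x \in \mathbb{R}^d$ and every $r > 0$, $\nu_k(B(x,2r)) \leq c\, \nu_k(B(x,r))$; i.e., $(\mathbb{R}^d, \nu_k)$ is a space of homogeneous type. -/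
open MeasureTheory Metric Filter Topology Set

noncomputable section

/-!
For `r > 0` the measure `ν_k(B(x,r))` is comparable to `W(x,r) · |B(x,r)|`, where
`W(x,r) = ∏ (|⟨ξ,x⟩| + r‖ξ‖)^{2k(ξ)}` (`dunklBallWeight`). The upper bound holds because
`|⟨ξ,y⟩| ≤ |⟨ξ,x⟩| + r‖ξ‖` on the ball. For the lower bound, the points of the ball where some
`|⟨ξ,y⟩|` drops below `ε (|⟨ξ,x⟩| + r‖ξ‖)` lie in finitely many slabs, each either empty or of
width `O(εr)`; for small `ε` they cover at most half of the ball, and on the rest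
`w_k ≥ ε^{2 Σ k} W(x,r)`. Doubling then follows from `W(x,2r) ≤ 4^{Σ k} W(x,r)` and
`|B(x,2r)| = 2^d |B(x,r)|`.
-/

open Module
open scoped ENNReal RealInnerProductSpace

section InnerProductSpace

variable {E : Type*} [NormedAddCommGroup E] [InnerProductSpace ℝ E]

theorem abs_abs_inner_sub_abs_inner_le (ξ x y : E) :
    |(|⟪ξ, y⟫| - |⟪ξ, x⟫|)| ≤ ‖ξ‖ * dist y x :=
  (abs_abs_sub_abs_le _ _).trans <| by
    rw [← inner_sub_right, dist_eq_norm]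
    exact abs_real_inner_le_norm _ _

def ballSlab (x : E) (r : ℝ) (ξ : E) (δ : ℝ) : Set E :=
  {y ∈ closedBall x r | |⟪ξ, y⟫| ≤ δ}

variable [MeasurableSpace E] [BorelSpace E]

theorem measurableSet_ballSlab (x : E) (r : ℝ) (ξ : E) (δ : ℝ) :
    MeasurableSet (ballSlab x r ξ δ) :=
  measurableSet_closedBall.inter (measurableSet_le (f := fun y => |⟪ξ, y⟫|) (by fun_prop)
    measurable_const)

variable [FiniteDimensional ℝ E]

theorem volume_ballSlab_le_of_norm_eq_one {u : E} (hu : ‖u‖ = 1) (x : E) {r : ℝ} (hr : 0 < r)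
    (δ : ℝ) :
    volume (ballSlab x r u δ) ≤ ENNReal.ofReal (δ / r) * ENNReal.ofReal (2 * r) ^ finrank ℝ E := by
  set n := finrank ℝ E
  have hn : 0 < n := finrank_pos_iff_exists_ne_zero.mpr ⟨u, norm_ne_zero_iff.mp (by simp [hu])⟩
  let i₀ : Fin n := ⟨0, hn⟩
  have hu' : Orthonormal ℝ (({i₀} : Set (Fin n)).domRestrict fun _ => u) :=
    ⟨fun _ => hu, fun i j hij => absurd (Subsingleton.elim i j) hij⟩
  obtain ⟨b, hb⟩ := hu'.exists_orthonormalBasis_extension_of_card_eq (by simp [n])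
  -- In coordinates for an orthonormal basis starting with `u`, the slab lies in a box.
  let φ : E → Fin n → ℝ := fun y => (MeasurableEquiv.toLp 2 (Fin n → ℝ)).symm (b.repr y)
  have hφ : MeasurePreserving φ volume volume :=
    (EuclideanSpace.volume_preserving_symm_measurableEquiv_toLp (Fin n)).comp
      b.measurePreserving_repr
  let I : Fin n → Set ℝ :=
    Function.update (fun i => Icc (φ x i - r) (φ x i + r)) i₀ (Icc (-δ) δ)
  have hsub : ballSlab x r u δ ⊆ φ ⁻¹' univ.pi I := by
    rintro y ⟨hyx, hyu⟩ i -
    rcases eq_or_ne i i₀ with rfl | hi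
    · simpa [I, φ, b.repr_apply_apply, hb] using abs_le.mp hyu
    · have : |φ y i - φ x i| ≤ r := calc
          _ = |b.repr (y - x) i| := by simp [φ]
          _ ≤ ‖b.repr (y - x)‖ := PiLp.norm_apply_le (b.repr (y - x)) i
          _ = dist y x := by rw [b.repr.norm_map, dist_eq_norm]
          _ ≤ r := hyx
      simp only [I, Function.update_of_ne hi, mem_Icc]
      constructor <;> linarith [abs_le.mp this]
  have hI : ∀ i ∈ Finset.univ.erase i₀, volume (I i) = ENNReal.ofReal (2 * r) := by
    intro i hi
    simp only [I, Function.update_of_ne (Finset.ne_of_mem_erase hi), Real.volume_Icc]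
    ring_nf
  calc volume (ballSlab x r u δ)
      ≤ volume (φ ⁻¹' univ.pi I) := measure_mono hsub
    _ = ∏ i, volume (I i) := by
        rw [hφ.measure_preimage, volume_pi_pi]
        exact (MeasurableSet.univ_pi fun i => by
          rcases eq_or_ne i i₀ with rfl | hi <;> simp [I, *, measurableSet_Icc]).nullMeasurableSet
    _ = ENNReal.ofReal (2 * δ) * ENNReal.ofReal (2 * r) ^ (n - 1) := by
        rw [← Finset.mul_prod_erase _ _ (Finset.mem_univ i₀), Finset.prod_congr rfl hI,
          Finset.prod_const, Finset.card_erase_of_mem (Finset.mem_univ _), Finset.card_univ,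
          Fintype.card_fin]
        simp only [I, Function.update_self, Real.volume_Icc]
        ring_nf
    _ = ENNReal.ofReal (δ / r * (2 * r)) * ENNReal.ofReal (2 * r) ^ (n - 1) := by
        rw [div_mul_eq_mul_div, mul_div_assoc, mul_div_cancel_right₀ _ hr.ne', mul_comm δ]
    _ = ENNReal.ofReal (δ / r) * ENNReal.ofReal (2 * r) ^ n := by
        rw [ENNReal.ofReal_mul' (by positivity), mul_assoc, ← pow_succ', Nat.sub_add_cancel hn]

theorem volume_ballSlab_mul_le {ξ : E} (hξ : ξ ≠ 0) (x : E) {r : ℝ} (hr : 0 < r) {ε : ℝ}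
    (hε₀ : 0 ≤ ε) (hε : ε ≤ 1 / 2) :
    volume (ballSlab x r ξ (ε * (|⟪ξ, x⟫| + r * ‖ξ‖))) ≤
      ENNReal.ofReal (4 * ε) * ENNReal.ofReal (2 * r) ^ finrank ℝ E := by
  set M := |⟪ξ, x⟫| + r * ‖ξ‖
  rcases eq_empty_or_nonempty (ballSlab x r ξ (ε * M)) with h | ⟨y₀, hy₀x, hy₀⟩
  · rw [h, measure_empty]
    exact bot_le
  have hξ' : 0 < ‖ξ‖ := norm_pos_iff.mpr hξ
  -- A nonempty slab forces the hyperplane `ξ⊥` to pass near the ball, so that `M ≤ 4 r ‖ξ‖`.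
  have hM : M ≤ 4 * r * ‖ξ‖ := by
    have h₁ := (abs_le.mp (abs_abs_inner_sub_abs_inner_le ξ x y₀)).1
    have h₂ := mul_le_mul_of_nonneg_left (mem_closedBall.mp hy₀x) hξ'.le
    have h₃ : ε * M ≤ M / 2 := by nlinarith [abs_nonneg ⟪ξ, x⟫, mul_pos hr hξ']
    linarith
  have hu : ‖(‖ξ‖⁻¹ : ℝ) • ξ‖ = 1 := by
    rw [norm_smul, norm_inv, norm_norm, inv_mul_cancel₀ hξ'.ne']
  calc _ ≤ volume (ballSlab x r ((‖ξ‖⁻¹ : ℝ) • ξ) (4 * ε * r)) := by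
        refine measure_mono fun y ⟨hyx, hy⟩ => ⟨hyx, ?_⟩
        rw [real_inner_smul_left, abs_mul, abs_inv, abs_norm, inv_mul_le_iff₀ hξ']
        nlinarith
    _ ≤ ENNReal.ofReal (4 * ε * r / r) * ENNReal.ofReal (2 * r) ^ finrank ℝ E :=
        volume_ballSlab_le_of_norm_eq_one hu x hr _
    _ = _ := by rw [mul_div_cancel_right₀ _ hr.ne']

theorem exists_volume_biUnion_ballSlab_le_half (s : Finset E) (hs : ∀ ξ ∈ s, ξ ≠ 0) :
    ∃ ε, 0 < ε ∧ ∀ (x : E) (r : ℝ), 0 < r →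
      volume (⋃ ξ ∈ s, ballSlab x r ξ (ε * (|⟪ξ, x⟫| + r * ‖ξ‖))) ≤
        volume (closedBall x r) / 2 := by
  set V := volume (closedBall (0 : E) (1 / 2))
  have hV : 0 < V / 2 :=
    ENNReal.half_pos (measure_closedBall_pos volume 0 (by norm_num)).ne'
  have hsmall : Tendsto (fun ε : ℝ => (s.card : ℝ≥0∞) * ENNReal.ofReal (4 * ε)) (𝓝 0) (𝓝 0) := by
    have hcont : Continuous fun ε : ℝ => (s.card : ℝ≥0∞) * ENNReal.ofReal (4 * ε) :=
      (ENNReal.continuous_const_mul (ENNReal.natCast_ne_top _)).comp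
        (ENNReal.continuous_ofReal.comp (continuous_const_mul 4))
    simpa using hcont.tendsto 0
  have hIoc : ∀ᶠ ε in 𝓝[>] (0 : ℝ), ε ∈ Ioc 0 (1 / 2) := Ioc_mem_nhdsGT (by norm_num)
  obtain ⟨ε, ⟨hε₀, hε⟩, hεV⟩ :=
    (hIoc.and ((hsmall.mono_left nhdsWithin_le_nhds).eventually (gt_mem_nhds hV))).exists
  refine ⟨ε, hε₀, fun x r hr => ?_⟩
  have hball : volume (closedBall x r) = ENNReal.ofReal ((2 * r) ^ finrank ℝ E) * V := by
    rw [← Measure.addHaar_closedBall_mul volume x (by positivity) (by norm_num)]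
    ring_nf
  calc _ ≤ ∑ ξ ∈ s, volume (ballSlab x r ξ (ε * (|⟪ξ, x⟫| + r * ‖ξ‖))) :=
        measure_biUnion_finset_le _ _
    _ ≤ ∑ ξ ∈ s, ENNReal.ofReal (4 * ε) * ENNReal.ofReal (2 * r) ^ finrank ℝ E :=
        Finset.sum_le_sum fun ξ hξ => volume_ballSlab_mul_le (hs ξ hξ) x hr hε₀.le hε
    _ = s.card * ENNReal.ofReal (4 * ε) * ENNReal.ofReal ((2 * r) ^ finrank ℝ E) := by
        rw [Finset.sum_const, nsmul_eq_mul, ENNReal.ofReal_pow (by positivity), mul_assoc]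
    _ ≤ V / 2 * ENNReal.ofReal ((2 * r) ^ finrank ℝ E) := by gcongr
    _ = volume (closedBall x r) / 2 := by rw [hball, mul_div_assoc, mul_comm]

end InnerProductSpace

section Dunkl

variable {d : ℕ} {Rp : Finset (EuclideanSpace ℝ (Fin d))} {k : EuclideanSpace ℝ (Fin d) → ℝ}

def dunklBallWeight (Rp : Finset (EuclideanSpace ℝ (Fin d))) (k : EuclideanSpace ℝ (Fin d) → ℝ)
    (x : EuclideanSpace ℝ (Fin d)) (r : ℝ) : ℝ :=
  ∏ ξ ∈ Rp, (|⟪ξ, x⟫| + r * ‖ξ‖) ^ (2 * k ξ)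

theorem dunklWeight_le_dunklBallWeight (hk : ∀ ξ ∈ Rp, 0 ≤ k ξ)
    {x y : EuclideanSpace ℝ (Fin d)} {r : ℝ} (hy : y ∈ closedBall x r) :
    dunklWeight Rp k y ≤ dunklBallWeight Rp k x r :=
  Finset.prod_le_prod (fun _ _ => by positivity) fun ξ hξ =>
    Real.rpow_le_rpow (abs_nonneg _)
      (by linarith [(abs_le.mp (abs_abs_inner_sub_abs_inner_le ξ x y)).2,
        mul_le_mul_of_nonneg_left (mem_closedBall.mp hy) (norm_nonneg ξ)])
      (by linarith [hk ξ hξ])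

theorem mul_dunklBallWeight_le_dunklWeight (hk : ∀ ξ ∈ Rp, 0 ≤ k ξ)
    {x y : EuclideanSpace ℝ (Fin d)} {r ε : ℝ} (hr : 0 ≤ r) (hε : 0 ≤ ε)
    (hy : ∀ ξ ∈ Rp, ε * (|⟪ξ, x⟫| + r * ‖ξ‖) ≤ |⟪ξ, y⟫|) :
    (∏ ξ ∈ Rp, ε ^ (2 * k ξ)) * dunklBallWeight Rp k x r ≤ dunklWeight Rp k y := by
  rw [dunklBallWeight, ← Finset.prod_mul_distrib]
  refine Finset.prod_le_prod (fun _ _ => by positivity) fun ξ hξ => ?_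
  rw [← Real.mul_rpow hε (by positivity)]
  exact Real.rpow_le_rpow (by positivity) (hy ξ hξ) (by linarith [hk ξ hξ])

theorem dunklBallWeight_two_mul_le (hk : ∀ ξ ∈ Rp, 0 ≤ k ξ) (x : EuclideanSpace ℝ (Fin d))
    {r : ℝ} (hr : 0 ≤ r) :
    dunklBallWeight Rp k x (2 * r) ≤
      (∏ ξ ∈ Rp, (2 : ℝ) ^ (2 * k ξ)) * dunklBallWeight Rp k x r := by
  rw [dunklBallWeight, dunklBallWeight, ← Finset.prod_mul_distrib]
  refine Finset.prod_le_prod (fun _ _ => by positivity) fun ξ hξ => ?_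
  rw [← Real.mul_rpow zero_le_two (by positivity)]
  exact Real.rpow_le_rpow (by positivity) (by nlinarith [abs_nonneg ⟪ξ, x⟫, norm_nonneg ξ])
    (by linarith [hk ξ hξ])

theorem dunklMeasure_closedBall_le (hk : ∀ ξ ∈ Rp, 0 ≤ k ξ) (x : EuclideanSpace ℝ (Fin d))
    (r : ℝ) :
    dunklMeasure Rp k (closedBall x r) ≤
      ENNReal.ofReal (dunklBallWeight Rp k x r) * volume (closedBall x r) :=
  calc dunklMeasure Rp k (closedBall x r)
      = ∫⁻ y in closedBall x r, ENNReal.ofReal (dunklWeight Rp k y) :=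
        withDensity_apply _ measurableSet_closedBall
    _ ≤ ∫⁻ _ in closedBall x r, ENNReal.ofReal (dunklBallWeight Rp k x r) :=
        setLIntegral_mono' measurableSet_closedBall fun _ hy =>
          ENNReal.ofReal_le_ofReal (dunklWeight_le_dunklBallWeight hk hy)
    _ = _ := setLIntegral_const _ _

theorem exists_dunklBallWeight_mul_volume_le (hRp : ∀ ξ ∈ Rp, ξ ≠ 0) (hk : ∀ ξ ∈ Rp, 0 ≤ k ξ) :
    ∃ C : ℝ, 0 < C ∧ ∀ (x : EuclideanSpace ℝ (Fin d)) (r : ℝ), 0 < r →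
      ENNReal.ofReal (dunklBallWeight Rp k x r) * volume (closedBall x r) ≤
        ENNReal.ofReal C * dunklMeasure Rp k (closedBall x r) := by
  obtain ⟨ε, hε, hslabs⟩ := exists_volume_biUnion_ballSlab_le_half Rp hRp
  set P := ∏ ξ ∈ Rp, ε ^ (2 * k ξ)
  have hP : 0 < P := Finset.prod_pos fun ξ _ => Real.rpow_pos_of_pos hε _
  refine ⟨2 / P, by positivity, fun x r hr => ?_⟩
  set B := closedBall x r
  set G := B \ ⋃ ξ ∈ Rp, ballSlab x r ξ (ε * (|⟪ξ, x⟫| + r * ‖ξ‖))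
  have hGmeas : MeasurableSet G := measurableSet_closedBall.diff <|
    Finset.measurableSet_biUnion _ fun ξ _ => measurableSet_ballSlab x r ξ _
  have hGvol : volume B ≤ 2 * volume G := by
    rw [mul_comm, ← ENNReal.div_le_iff_le_mul (Or.inl two_ne_zero) (Or.inl ENNReal.ofNat_ne_top)]
    calc volume B / 2 = volume B - volume B / 2 :=
          (ENNReal.sub_half measure_closedBall_lt_top.ne).symm
      _ ≤ _ := tsub_le_tsub_left (hslabs x r hr) _
      _ ≤ volume G := le_measure_sdiff
  have hGweight : ∀ y ∈ G, P * dunklBallWeight Rp k x r ≤ dunklWeight Rp k y := fun y hy =>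
    mul_dunklBallWeight_le_dunklWeight hk hr.le hε.le fun ξ hξ =>
      le_of_lt (not_le.mp fun h => hy.2 (mem_biUnion hξ ⟨hy.1, h⟩))
  calc ENNReal.ofReal (dunklBallWeight Rp k x r) * volume B
      ≤ ENNReal.ofReal (dunklBallWeight Rp k x r) * (2 * volume G) := by gcongr
    _ = ENNReal.ofReal (2 / P) * (ENNReal.ofReal (P * dunklBallWeight Rp k x r) * volume G) := by
        rw [← mul_assoc (ENNReal.ofReal (2 / P)), ← ENNReal.ofReal_mul (by positivity),
          show 2 / P * (P * dunklBallWeight Rp k x r) = 2 * dunklBallWeight Rp k x r by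
            field_simp,
          ENNReal.ofReal_mul zero_le_two, ENNReal.ofReal_ofNat]
        ring
    _ ≤ ENNReal.ofReal (2 / P) * dunklMeasure Rp k B := by
        gcongr
        calc _ = ∫⁻ _ in G, ENNReal.ofReal (P * dunklBallWeight Rp k x r) :=
              (setLIntegral_const _ _).symm
          _ ≤ ∫⁻ y in G, ENNReal.ofReal (dunklWeight Rp k y) :=
              setLIntegral_mono' hGmeas fun y hy => ENNReal.ofReal_le_ofReal (hGweight y hy)
          _ ≤ ∫⁻ y in B, ENNReal.ofReal (dunklWeight Rp k y) := lintegral_mono_set sdiff_subset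
          _ = dunklMeasure Rp k B := (withDensity_apply _ measurableSet_closedBall).symm

end Dunkl

theorem dunklMeasure_doubling_general {d : ℕ}
    (Rp : Finset (EuclideanSpace ℝ (Fin d))) (hRp : ∀ ξ ∈ Rp, ξ ≠ 0)
    (k : EuclideanSpace ℝ (Fin d) → ℝ) (hk : ∀ ξ ∈ Rp, 0 ≤ k ξ) :
    ∃ c : ℝ, 0 < c ∧ ∀ (x : EuclideanSpace ℝ (Fin d)) (r : ℝ), 0 < r →
      (dunklMeasure Rp k) (closedBall x (2 * r))
        ≤ ENNReal.ofReal c * (dunklMeasure Rp k) (closedBall x r) := by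
  obtain ⟨C, hC, hlower⟩ := exists_dunklBallWeight_mul_volume_le hRp hk
  set A := ∏ ξ ∈ Rp, (2 : ℝ) ^ (2 * k ξ)
  have hA : 0 < A := Finset.prod_pos fun ξ _ => Real.rpow_pos_of_pos two_pos _
  refine ⟨A * 2 ^ d * C, by positivity, fun x r hr => ?_⟩
  have hvol : volume (closedBall x (2 * r)) = ENNReal.ofReal (2 ^ d) * volume (closedBall x r) := by
    rw [Measure.addHaar_closedBall_mul volume x zero_le_two hr.le, finrank_euclideanSpace_fin,
      Measure.addHaar_closedBall_center volume x r]
  calc dunklMeasure Rp k (closedBall x (2 * r))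
      ≤ ENNReal.ofReal (dunklBallWeight Rp k x (2 * r)) * volume (closedBall x (2 * r)) :=
        dunklMeasure_closedBall_le hk x _
    _ ≤ ENNReal.ofReal (A * dunklBallWeight Rp k x r) *
          (ENNReal.ofReal (2 ^ d) * volume (closedBall x r)) := by
        rw [hvol]
        gcongr
        exact dunklBallWeight_two_mul_le hk x hr.le
    _ = ENNReal.ofReal (A * 2 ^ d) *
          (ENNReal.ofReal (dunklBallWeight Rp k x r) * volume (closedBall x r)) := by
        rw [ENNReal.ofReal_mul hA.le, ENNReal.ofReal_mul hA.le]
        ring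
    _ ≤ ENNReal.ofReal (A * 2 ^ d) * (ENNReal.ofReal C * dunklMeasure Rp k (closedBall x r)) :=
        mul_le_mul_right (hlower x r hr) _
    _ = ENNReal.ofReal (A * 2 ^ d * C) * dunklMeasure Rp k (closedBall x r) := by
        rw [← mul_assoc, ← ENNReal.ofReal_mul (by positivity)]

/-- Doubling property: `(ℝ^d, ν_k)` is a space of homogeneous type, i.e. there is `c > 0` with
`ν_k(B(x,2r)) ≤ c ν_k(B(x,r))` for all `x ∈ ℝ^d` and `r > 0`. -/
theorem dunklMeasure_doubling {d : ℕ} (hd : 0 < d)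
    (Rp : Finset (EuclideanSpace ℝ (Fin d))) (hRp : ∀ ξ ∈ Rp, ξ ≠ 0)
    (k : EuclideanSpace ℝ (Fin d) → ℝ) (hk : ∀ ξ ∈ Rp, 0 ≤ k ξ) :
    ∃ c : ℝ, 0 < c ∧ ∀ (x : EuclideanSpace ℝ (Fin d)) (r : ℝ), 0 < r →
      (dunklMeasure Rp k) (closedBall x (2 * r))
        ≤ ENNReal.ofReal c * (dunklMeasure Rp k) (closedBall x r) :=
  dunklMeasure_doubling_general Rp hRp k hk
end
end
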